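/- Assume U satisfies Assumption 1 and X satisfies Assumption 2. Then lim_{c→+∞} Γ(c) = −∞. -/

import Mathlib

open MeasureTheory ProbabilityTheory Filter Matrix
open scoped ENNReal NNReal Topology

noncomputable section

/-- Signed expectation with values in `EReal`. -/
def eexp {Ω : Type*} [MeasurableSpace Ω] (P : Measure Ω) (f : Ω → ℝ) : EReal :=
  ((∫⁻ ω, ENNReal.ofReal (f ω) ∂P : ℝ≥0∞) : EReal) -
    ((∫⁻ ω, ENNReal.ofReal (-(f ω)) ∂P : ℝ≥0∞) : EReal)

/-- NMVM return vector `X = μ + γ Z + √Z A N`. -/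
def nmvmX {Ω : Type*} {d : ℕ} (μ γ : Fin d → ℝ) (A : Matrix (Fin d) (Fin d) ℝ)
    (Z : Ω → ℝ) (N : Ω → Fin d → ℝ) (ω : Ω) : Fin d → ℝ :=
  fun i => μ i + γ i * Z ω + Real.sqrt (Z ω) * (A *ᵥ N ω) i

/-- Next-period wealth `W(x) = W₀(1+r_f) + W₀ xᵀ(X − 𝟏 r_f)` of portfolio `x`. -/
def wealth {Ω : Type*} {d : ℕ} (μ γ : Fin d → ℝ) (A : Matrix (Fin d) (Fin d) ℝ)
    (Z : Ω → ℝ) (N : Ω → Fin d → ℝ) (rf W0 : ℝ) (x : Fin d → ℝ) (ω : Ω) : ℝ :=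
  W0 * (1 + rf) + W0 * ∑ i, x i * (nmvmX μ γ A Z N ω i - rf)

/-- The vector `v = μ − 𝟏 r_f + γ E[Z]`. -/
def vVec {Ω : Type*} [MeasurableSpace Ω] (P : Measure Ω) {d : ℕ}
    (μ γ : Fin d → ℝ) (rf : ℝ) (Z : Ω → ℝ) : Fin d → ℝ :=
  fun i => μ i - rf + γ i * ∫ ω, Z ω ∂P

/-- The quadratic form `vᵀ Σ⁻¹ v`. -/
def vSv {Ω : Type*} [MeasurableSpace Ω] (P : Measure Ω) {d : ℕ}
    (μ γ : Fin d → ℝ) (rf : ℝ) (A : Matrix (Fin d) (Fin d) ℝ) (Z : Ω → ℝ) : ℝ :=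
  vVec P μ γ rf Z ⬝ᵥ ((A * Aᵀ)⁻¹ *ᵥ vVec P μ γ rf Z)

/-- `α = vᵀΣ⁻¹(μ − 𝟏 r_f)/(vᵀΣ⁻¹v)`. -/
def alphaC {Ω : Type*} [MeasurableSpace Ω] (P : Measure Ω) {d : ℕ}
    (μ γ : Fin d → ℝ) (rf : ℝ) (A : Matrix (Fin d) (Fin d) ℝ) (Z : Ω → ℝ) : ℝ :=
  (vVec P μ γ rf Z ⬝ᵥ ((A * Aᵀ)⁻¹ *ᵥ fun i => μ i - rf)) / vSv P μ γ rf A Z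

/-- `β = vᵀΣ⁻¹γ/(vᵀΣ⁻¹v)`. -/
def betaC {Ω : Type*} [MeasurableSpace Ω] (P : Measure Ω) {d : ℕ}
    (μ γ : Fin d → ℝ) (rf : ℝ) (A : Matrix (Fin d) (Fin d) ℝ) (Z : Ω → ℝ) : ℝ :=
  (vVec P μ γ rf Z ⬝ᵥ ((A * Aᵀ)⁻¹ *ᵥ γ)) / vSv P μ γ rf A Z

/-- `σ = 1/√(vᵀΣ⁻¹v)`. -/
def sigmaC {Ω : Type*} [MeasurableSpace Ω] (P : Measure Ω) {d : ℕ}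
    (μ γ : Fin d → ℝ) (rf : ℝ) (A : Matrix (Fin d) (Fin d) ℝ) (Z : Ω → ℝ) : ℝ :=
  1 / Real.sqrt (vSv P μ γ rf A Z)

/-- `Γ(c) = E[U(W₀(1+r_f) + W₀ c (α + β Z + σ √Z N₁))]`, valued in `EReal`. -/
def GammaFun {Ω : Type*} [MeasurableSpace Ω] (P : Measure Ω) {d : ℕ}
    (μ γ : Fin d → ℝ) (rf : ℝ) (A : Matrix (Fin d) (Fin d) ℝ) (Z : Ω → ℝ)
    (N1 : Ω → ℝ) (W0 : ℝ) (U : ℝ → ℝ) (c : ℝ) : EReal :=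
  eexp P fun ω => U (W0 * (1 + rf) + W0 * c *
    (alphaC P μ γ rf A Z + betaC P μ γ rf A Z * Z ω +
      sigmaC P μ γ rf A Z * Real.sqrt (Z ω) * N1 ω))

/-!
Because `σ > 0` and `N₁` is a standard Gaussian independent of `Z > 0`, the event
`{η ≤ -1}` has positive probability: confine `Z` to a compact subinterval of `(0, ∞)` and
take `N₁` very negative. On that event the wealth `W₀(1+r_f) + W₀ c η` tends to `-∞`
uniformly as `c → ∞`, hence so does `U` of it, while `U` is bounded above everywhere.
The expectation is therefore eventually below any given level.
-/

section Expectation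

variable {Ω : Type*} [MeasurableSpace Ω] (P : Measure Ω) [IsProbabilityMeasure P]

lemma eexp_le_sub_mul_measureReal {f : Ω → ℝ} {M T : ℝ} (hM : 0 ≤ M) (hT : 0 ≤ T)
    (hfM : ∀ ω, f ω ≤ M) {S : Set Ω} (hS : MeasurableSet S) (hfS : ∀ ω ∈ S, f ω ≤ -T) :
    eexp P f ≤ ((M - T * P.real S : ℝ) : EReal) := by
  have hpos : ∫⁻ ω, ENNReal.ofReal (f ω) ∂P ≤ ENNReal.ofReal M :=
    calc ∫⁻ ω, ENNReal.ofReal (f ω) ∂P ≤ ∫⁻ _, ENNReal.ofReal M ∂P :=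
          lintegral_mono fun ω => ENNReal.ofReal_le_ofReal (hfM ω)
      _ = ENNReal.ofReal M := by simp
  have hneg : ENNReal.ofReal (T * P.real S) ≤ ∫⁻ ω, ENNReal.ofReal (-f ω) ∂P :=
    calc ENNReal.ofReal (T * P.real S)
      _ = ∫⁻ ω, S.indicator (fun _ => ENNReal.ofReal T) ω ∂P := by
          rw [lintegral_indicator_const hS, ENNReal.ofReal_mul hT, ofReal_measureReal]
      _ ≤ ∫⁻ ω, ENNReal.ofReal (-f ω) ∂P := by
          refine lintegral_mono fun ω => ?_
          by_cases hω : ω ∈ S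
          · simpa [hω] using ENNReal.ofReal_le_ofReal (le_neg_of_le_neg (hfS ω hω))
          · simp [hω]
  calc eexp P f
    _ ≤ ((ENNReal.ofReal M : ℝ≥0∞) : EReal) - (ENNReal.ofReal (T * P.real S) : ℝ≥0∞) :=
        EReal.sub_le_sub (EReal.coe_ennreal_le_coe_ennreal_iff.2 hpos)
          (EReal.coe_ennreal_le_coe_ennreal_iff.2 hneg)
    _ = ((M - T * P.real S : ℝ) : EReal) := by
        rw [EReal.coe_ennreal_ofReal, EReal.coe_ennreal_ofReal, max_eq_left hM,
          max_eq_left (by positivity), EReal.coe_sub]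

lemma tendsto_eexp_nhds_bot {ι : Type*} {l : Filter ι} {F : ι → Ω → ℝ} {M : ℝ}
    (hFM : ∀ i ω, F i ω ≤ M) {S : Set Ω} (hS : MeasurableSet S) (hPS : P S ≠ 0)
    (hFS : ∀ T : ℝ, ∀ᶠ i in l, ∀ ω ∈ S, F i ω ≤ T) :
    Tendsto (fun i => eexp P (F i)) l (𝓝 ⊥) := by
  rw [EReal.tendsto_nhds_bot_iff_real]
  intro R
  have hp : 0 < P.real S := ENNReal.toReal_pos hPS (measure_ne_top P S)
  set T := (|max M 0 - R| + 1) / P.real S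
  have hTp : T * P.real S = |max M 0 - R| + 1 := div_mul_cancel₀ _ hp.ne'
  filter_upwards [hFS (-T)] with i hi
  calc eexp P (F i) ≤ ((max M 0 - T * P.real S : ℝ) : EReal) :=
        eexp_le_sub_mul_measureReal P (le_max_right M 0) (by positivity)
          (fun ω => (hFM i ω).trans (le_max_left M 0)) hS hi
    _ < R := EReal.coe_lt_coe_iff.2 (by linarith [le_abs_self (max M 0 - R)])

lemma tendsto_eexp_comp_affine_nhds_bot {g : Ω → ℝ} (hg : Measurable g)
    (hg_neg : P {ω | g ω ≤ -1} ≠ 0) (w : ℝ) {W0 : ℝ} (hW0 : 0 < W0) {U : ℝ → ℝ}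
    (hUbdd : BddAbove (Set.range U)) (hUbot : Tendsto U atBot atBot) :
    Tendsto (fun c => eexp P fun ω => U (w + W0 * c * g ω)) atTop (𝓝 ⊥) := by
  obtain ⟨M, hM⟩ := hUbdd
  refine tendsto_eexp_nhds_bot P (fun c ω => hM ⟨_, rfl⟩)
    (measurableSet_le hg measurable_const) hg_neg fun T => ?_
  obtain ⟨w₀, hw₀⟩ := eventually_atBot.mp (tendsto_atBot.mp hUbot T)
  filter_upwards [eventually_ge_atTop (max 0 ((w - w₀) / W0))] with c hc ω (hω : g ω ≤ -1)
  have hc0 : 0 ≤ c := (le_max_left _ _).trans hc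
  have hcW : w - w₀ ≤ W0 * c := by
    rw [← div_le_iff₀' hW0]; exact (le_max_right _ _).trans hc
  apply hw₀
  nlinarith [mul_le_mul_of_nonneg_left hω (mul_nonneg hW0.le hc0)]

end Expectation

lemma exists_measure_preimage_Icc_ne_zero {Ω : Type*} [MeasurableSpace Ω] (P : Measure Ω)
    [NeZero P] {Z : Ω → ℝ} (hZ : ∀ ω, 0 < Z ω) :
    ∃ n : ℕ, P (Z ⁻¹' Set.Icc ((n + 1 : ℝ)⁻¹) (n + 1)) ≠ 0 := by
  by_contra! h
  refine NeZero.ne P (Measure.measure_univ_eq_zero.mp ?_)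
  refine measure_mono_null (fun ω _ => ?_) (measure_iUnion_null h)
  obtain ⟨n, hn⟩ := exists_nat_ge (max (Z ω) (Z ω)⁻¹)
  refine Set.mem_iUnion.mpr ⟨n, ?_, by linarith [le_max_left (Z ω) (Z ω)⁻¹]⟩
  exact inv_le_of_inv_le₀ (hZ ω) (by linarith [le_max_right (Z ω) (Z ω)⁻¹])

lemma gaussianReal_Iio_ne_zero (m : ℝ) {v : ℝ≥0} (hv : v ≠ 0) (x : ℝ) :
    gaussianReal m v (Set.Iio x) ≠ 0 :=
  fun h => by simpa using gaussianReal_absolutelyContinuous' m hv h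

lemma measure_normalMeanVarianceMixture_le_ne_zero {Ω : Type*} [MeasurableSpace Ω]
    (P : Measure Ω) [IsProbabilityMeasure P] {Z N1 : Ω → ℝ} (hZ : ∀ ω, 0 < Z ω)
    (hN1meas : Measurable N1) (hN1 : Measure.map N1 P = gaussianReal 0 1)
    (hindep : IndepFun Z N1 P)
    (a b : ℝ) {s : ℝ} (hs : 0 < s) (L : ℝ) :
    P {ω | a + b * Z ω + s * Real.sqrt (Z ω) * N1 ω ≤ L} ≠ 0 := by
  obtain ⟨n, hn⟩ := exists_measure_preimage_Icc_ne_zero P hZ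
  set C := |a| + |b| * (n + 1) + |L|
  set K := C * Real.sqrt (n + 1) / s
  have hbox : Z ⁻¹' Set.Icc ((n + 1 : ℝ)⁻¹) (n + 1) ∩ N1 ⁻¹' Set.Iio (-K) ⊆
      {ω | a + b * Z ω + s * Real.sqrt (Z ω) * N1 ω ≤ L} := by
    rintro ω ⟨⟨hZlo, hZhi⟩, hN1ω : N1 ω < -K⟩
    have hab : a + b * Z ω ≤ |a| + |b| * (n + 1) :=
      add_le_add (le_abs_self a) ((mul_le_mul_of_nonneg_right (le_abs_self b) (hZ ω).le).trans
        (mul_le_mul_of_nonneg_left hZhi (abs_nonneg b)))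
    have hsqrt : (Real.sqrt (n + 1))⁻¹ ≤ Real.sqrt (Z ω) := by
      rw [← Real.sqrt_inv]; exact Real.sqrt_le_sqrt hZlo
    have hK : 0 ≤ K := by positivity
    have hN1K : s * Real.sqrt (Z ω) * N1 ω ≤ s * (Real.sqrt (n + 1))⁻¹ * -K := by
      calc s * Real.sqrt (Z ω) * N1 ω ≤ s * (Real.sqrt (n + 1))⁻¹ * N1 ω :=
            mul_le_mul_of_nonpos_right (by gcongr) (by linarith)
        _ ≤ s * (Real.sqrt (n + 1))⁻¹ * -K := by gcongr
    have hCK : s * (Real.sqrt (n + 1))⁻¹ * -K = -C := by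
      have : 0 < Real.sqrt (n + 1) := Real.sqrt_pos.mpr (by positivity)
      simp only [K]
      field_simp
    show a + b * Z ω + s * Real.sqrt (Z ω) * N1 ω ≤ L
    linarith [neg_abs_le L]
  refine fun h => ?_
  have hbox0 := measure_mono_null hbox h
  rw [hindep.measure_inter_preimage_eq_mul _ _ measurableSet_Icc measurableSet_Iio,
    ← Measure.map_apply hN1meas measurableSet_Iio, hN1, mul_eq_zero] at hbox0
  exact hbox0.elim hn (gaussianReal_Iio_ne_zero 0 one_ne_zero _)

lemma sigmaC_pos {Ω : Type*} [MeasurableSpace Ω] (P : Measure Ω) {d : ℕ}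
    {μ γ : Fin d → ℝ} {rf : ℝ} {A : Matrix (Fin d) (Fin d) ℝ} {Z : Ω → ℝ}
    (hPD : (A * Aᵀ).PosDef) (hv : vVec P μ γ rf Z ≠ 0) : 0 < sigmaC P μ γ rf A Z :=
  one_div_pos.mpr (Real.sqrt_pos.mpr (hPD.inv.dotProduct_mulVec_pos hv))

theorem stmt10_general {Ω : Type*} [MeasurableSpace Ω] (P : Measure Ω) [IsProbabilityMeasure P]
    {d : ℕ} (μ γ : Fin d → ℝ) (A : Matrix (Fin d) (Fin d) ℝ)
    (Z : Ω → ℝ) (N1 : Ω → ℝ)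
    (hZmeas : Measurable Z) (hN1meas : Measurable N1)
    (hN1law : Measure.map N1 P = gaussianReal 0 1)
    (hindep1 : IndepFun Z N1 P)
    (hPD : (A * Aᵀ).PosDef)
    (rf W0 : ℝ) (hW0 : 0 < W0)
    -- Assumption 1
    (U : ℝ → ℝ) (hUbdd : BddAbove (Set.range U))
    (hUbot : Tendsto U atBot atBot)
    -- Assumption 2
    (hZpos : ∀ ω, 0 < Z ω)
    (hv : vVec P μ γ rf Z ≠ 0) :
    Tendsto (fun c => GammaFun P μ γ rf A Z N1 W0 U c) atTop (𝓝 (⊥ : EReal)) := by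
  have hη : Measurable fun ω => alphaC P μ γ rf A Z + betaC P μ γ rf A Z * Z ω +
      sigmaC P μ γ rf A Z * Real.sqrt (Z ω) * N1 ω := by
    fun_prop
  exact tendsto_eexp_comp_affine_nhds_bot P hη
    (measure_normalMeanVarianceMixture_le_ne_zero P hZpos hN1meas hN1law hindep1 _ _
      (sigmaC_pos P hPD hv) _)
    _ hW0 hUbdd hUbot

/-- under Assumptions 1 and 2, `Γ(c) → −∞` as `c → +∞`. -/
theorem stmt10 {Ω : Type*} [MeasurableSpace Ω] (P : Measure Ω) [IsProbabilityMeasure P]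
    {d : ℕ} (μ γ : Fin d → ℝ) (A : Matrix (Fin d) (Fin d) ℝ)
    (Z : Ω → ℝ) (N : Ω → Fin d → ℝ) (N1 : Ω → ℝ)
    (hZmeas : Measurable Z) (hNmeas : Measurable N) (hN1meas : Measurable N1)
    (hNlaw : Measure.map N P = Measure.pi fun _ : Fin d => gaussianReal 0 1)
    (hindep : IndepFun Z N P)
    (hN1law : Measure.map N1 P = gaussianReal 0 1)
    (hindep1 : IndepFun Z N1 P)
    (hPD : (A * Aᵀ).PosDef)
    (rf W0 : ℝ) (hW0 : 0 < W0)
    -- Assumption 1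
    (U : ℝ → ℝ) (hUcont : Continuous U) (hUmono : Monotone U)
    (hUnonconst : ∃ w w' : ℝ, U w ≠ U w') (hUbdd : BddAbove (Set.range U))
    (hUbot : Tendsto U atBot atBot)
    -- Assumption 2
    (hZpos : ∀ ω, 0 < Z ω)
    (hZk : ∃ k : ℕ, 1 ≤ k ∧ (∫⁻ ω, ENNReal.ofReal (Z ω ^ k) ∂P) < ⊤)
    (hv : vVec P μ γ rf Z ≠ 0) :
    Tendsto (fun c => GammaFun P μ γ rf A Z N1 W0 U c) atTop (𝓝 (⊥ : EReal)) :=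
  stmt10_general P μ γ A Z N1 hZmeas hN1meas hN1law hindep1 hPD rf W0 hW0 U hUbdd hUbot hZpos hv

end
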